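/- arXiv:1201.3215 — 4 statements merged into one kernel-verified Lean document; each statement's English description precedes it below -/
import Mathlib

section
/- Let Δ > 0, let m ≥ 1, let packet sizes s_1, …, s_m > 0 and packet delays d_1 > d_2 > … > d_m ≥ 0 be given, set S = s_1 + … + s_m, and adopt the convention d_{m+1} = 0. Define n(r) = max{ k ∈ {0,…,m} : s_1 + … + s_k ≤ rΔ } and the delay reward function f(r) = Σ_{j=1}^{n(r)} s_j d_j + ( rΔ − Σ_{j=1}^{n(r)} s_j ) d_{n(r)+1} for r ∈ [0, S/Δ]. Then f is continuous and concave on [0, S/Δ]. -/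
/-- Chain lemma: if each successor step decreases, then `h b ≤ h a` for `a ≤ b`. -/
lemma chain_le (h : ℕ → ℝ) (a : ℕ) :
    ∀ b, a ≤ b → (∀ j, a ≤ j → j < b → h (j + 1) ≤ h j) → h b ≤ h a := by
  intro b
  induction b with
  | zero => intro hab _; simp_all
  | succ b ih =>
    intro hab H
    rcases Nat.lt_or_ge a (b + 1) with hlt | hge
    · have hab' : a ≤ b := Nat.lt_succ_iff.mp hlt
      exact le_trans (H b hab' (Nat.lt_succ_self b))
        (ih hab' fun j hj hjb => H j hj (Nat.lt_succ_of_lt hjb))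
    · have : a = b + 1 := le_antisymm hab hge
      simp [this]

/-- The delay reward function
`f(r) = ∑_{j=1}^{n(r)} s j * d j + (r Δ - ∑_{j=1}^{n(r)} s j) * d (n r + 1)`,
where `n(r)` is the largest `k ≤ m` with `∑_{j=1}^k s j ≤ r Δ`, packet sizes `s j > 0`,
delays `d 1 > d 2 > … > d m ≥ 0` and `d (m+1) = 0`, is continuous and concave on
`[0, S/Δ]` where `S = ∑_{j=1}^m s j`. -/
theorem delay_reward_continuous_concave
    (Δ : ℝ) (hΔ : 0 < Δ) (m : ℕ) (hm : 1 ≤ m)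
    (s d : ℕ → ℝ) (S : ℝ)
    (hs : ∀ j, 1 ≤ j → j ≤ m → 0 < s j)
    (hd_anti : ∀ j, 1 ≤ j → j < m → d (j + 1) < d j)
    (hd_last : 0 ≤ d m)
    (hd_conv : d (m + 1) = 0)
    (hS : S = ∑ j ∈ Finset.Icc 1 m, s j)
    (n : ℝ → ℕ)
    (hn_le : ∀ r ∈ Set.Icc (0 : ℝ) (S / Δ), n r ≤ m)
    (hn_sum : ∀ r ∈ Set.Icc (0 : ℝ) (S / Δ), ∑ j ∈ Finset.Icc 1 (n r), s j ≤ r * Δ)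
    (hn_max : ∀ r ∈ Set.Icc (0 : ℝ) (S / Δ), ∀ k, k ≤ m →
      (∑ j ∈ Finset.Icc 1 k, s j) ≤ r * Δ → k ≤ n r)
    (f : ℝ → ℝ)
    (hf : ∀ r ∈ Set.Icc (0 : ℝ) (S / Δ),
      f r = ∑ j ∈ Finset.Icc 1 (n r), s j * d j
        + (r * Δ - ∑ j ∈ Finset.Icc 1 (n r), s j) * d (n r + 1)) :
    ContinuousOn f (Set.Icc (0 : ℝ) (S / Δ)) ∧
      ConcaveOn ℝ (Set.Icc (0 : ℝ) (S / Δ)) f := by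
  set B : ℕ → ℝ := fun k => ∑ j ∈ Finset.Icc 1 k, s j with hB
  set A : ℕ → ℝ := fun k => ∑ j ∈ Finset.Icc 1 k, s j * d j with hA
  set g : ℕ → ℝ → ℝ := fun k r => A k + (r * Δ - B k) * d (k + 1) with hg
  -- weak antitonicity of d on [1, m]
  have hd_weak : ∀ j, 1 ≤ j → j ≤ m → d (j + 1) ≤ d j := by
    intro j h1 h2
    rcases lt_or_eq_of_le h2 with h | h
    · exact (hd_anti j h1 h).le
    · subst h; rw [hd_conv]; exact hd_last
  -- monotonicity of B
  have hB_mono : ∀ j k, j ≤ k → k ≤ m → B j ≤ B k := by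
    intro j k hjk hkm
    apply Finset.sum_le_sum_of_subset_of_nonneg
    · exact Finset.Icc_subset_Icc_right hjk
    · intro i hi _
      exact (hs i (Finset.mem_Icc.mp hi).1 (le_trans (Finset.mem_Icc.mp hi).2 hkm)).le
  -- successor difference of g
  have hg_succ : ∀ k r, k < m →
      g (k + 1) r - g k r = (r * Δ - B (k + 1)) * (d (k + 2) - d (k + 1)) := by
    intro k r hk
    have hBs : B (k + 1) = B k + s (k + 1) := Finset.sum_Icc_succ_top (Nat.le_add_left 1 k) s
    have hAs : A (k + 1) = A k + s (k + 1) * d (k + 1) :=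
      Finset.sum_Icc_succ_top (Nat.le_add_left 1 k) (fun j => s j * d j)
    simp only [hg, hAs, hBs]
    ring
  -- the minimality property: g (n x) x ≤ g k x for all k ≤ m
  have hmin : ∀ x ∈ Set.Icc (0 : ℝ) (S / Δ), ∀ k, k ≤ m → g (n x) x ≤ g k x := by
    intro x hx k hk
    have hnx := hn_le x hx
    have hxΔ : B (n x) ≤ x * Δ := hn_sum x hx
    rcases le_or_gt k (n x) with hkn | hkn
    · -- descending from k to n x : g decreases
      apply chain_le (fun k => g k x) k (n x) hkn
      intro j hj hjn
      have hjm : j < m := lt_of_lt_of_le hjn hnx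
      have h1 : x * Δ - B (j + 1) ≥ 0 := by
        have := hB_mono (j + 1) (n x) hjn hnx
        linarith
      have h2 : d (j + 2) - d (j + 1) ≤ 0 := by
        have := hd_weak (j + 1) (Nat.le_add_left 1 j) hjm
        linarith
      have := hg_succ j x hjm
      nlinarith
    · -- ascending from n x to k : g increases
      have : -(g k x) ≤ -(g (n x) x) := by
        apply chain_le (fun k => -(g k x)) (n x) k hkn.le
        intro j hj hjk
        have hjm : j < m := lt_of_lt_of_le hjk hk
        simp only [neg_le_neg_iff]
        have h1 : x * Δ - B (j + 1) < 0 := by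
          by_contra h
          push_neg at h
          have := hn_max x hx (j + 1) hjm (by linarith)
          omega
        have h2 : d (j + 2) - d (j + 1) ≤ 0 := by
          have := hd_weak (j + 1) (Nat.le_add_left 1 j) hjm
          linarith
        have := hg_succ j x hjm
        nlinarith
      linarith
  -- f agrees with g (n ·) on the interval
  have hfg : ∀ x ∈ Set.Icc (0 : ℝ) (S / Δ), f x = g (n x) x := fun x hx => hf x hx
  -- f is the pointwise inf' of the g's
  have hne : (Finset.range (m + 1)).Nonempty := ⟨0, Finset.mem_range.mpr (Nat.succ_pos m)⟩
  have hf_inf : ∀ x ∈ Set.Icc (0 : ℝ) (S / Δ),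
      f x = (Finset.range (m + 1)).inf' hne (fun k => g k x) := by
    intro x hx
    rw [hfg x hx]
    apply le_antisymm
    · apply Finset.le_inf'
      intro k hk
      exact hmin x hx k (Nat.lt_succ_iff.mp (Finset.mem_range.mp hk))
    · exact Finset.inf'_le _ (Finset.mem_range.mpr (Nat.lt_succ_of_le (hn_le x hx)))
  constructor
  · -- continuity
    have hc : ContinuousOn (fun x => (Finset.range (m + 1)).inf' hne (fun k => g k x))
        (Set.Icc (0 : ℝ) (S / Δ)) := by
      apply Continuous.continuousOn
      apply Continuous.finset_inf'_apply hne
      intro k _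
      simp only [hg]
      fun_prop
    exact hc.congr fun x hx => hf_inf x hx
  · -- concavity
    refine ⟨convex_Icc _ _, ?_⟩
    intro x hx y hy a b ha hb hab
    have hz : a • x + b • y ∈ Set.Icc (0 : ℝ) (S / Δ) :=
      (convex_Icc (0 : ℝ) (S / Δ)) hx hy ha hb hab
    set z := a • x + b • y with hzdef
    have hgaff : g (n z) z = a * g (n z) x + b * g (n z) y := by
      simp only [hg, hzdef, smul_eq_mul]
      linear_combination (A (n z) - B (n z) * d (n z + 1)) * hab.symm
    have h1 : f x ≤ g (n z) x := (hfg x hx).le.trans (hmin x hx (n z) (hn_le z hz))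
    have h2 : f y ≤ g (n z) y := (hfg y hy).le.trans (hmin y hy (n z) (hn_le z hz))
    have := hfg z hz
    have ha' := mul_le_mul_of_nonneg_left h1 ha
    have hb' := mul_le_mul_of_nonneg_left h2 hb
    simp only [smul_eq_mul]
    linarith [hgaff]
end

section
/- Let ψ : (0,∞) → ℝ be concave and nondecreasing, and let c_1, c_2 > 0. Then for all x > 0 the function h(x) = x · ψ( min(c_1 x, c_2) / x ) satisfies h(x) = min( x · ψ(c_1), x · ψ(c_2 / x) ), and consequently h is concave on (0,∞). -/
/-!
Since `min (c₁ x) c₂ / x = min c₁ (c₂ / x)` and `ψ` is nondecreasing, `h` is the pointwise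
minimum of the linear function `x ↦ x ψ(c₁)` and the perspective `x ↦ x ψ(c₂ / x)` of `ψ`.
The perspective of a concave function is concave, and a minimum of concave functions is concave.
-/

open Set

theorem ConcaveOn.mul_apply_const_div {g : ℝ → ℝ} (hg : ConcaveOn ℝ (Ioi 0) g) {c : ℝ}
    (hc : 0 < c) : ConcaveOn ℝ (Ioi 0) fun x => x * g (c / x) := by
  refine ⟨convex_Ioi 0, fun a (ha : 0 < a) b (hb : 0 < b) μ ν hμ hν hμν => ?_⟩
  set z := μ * a + ν * b
  have hz_pos : 0 < z := convex_Ioi (0 : ℝ) ha hb hμ hν hμν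
  -- Concavity of `g` at `c / a` and `c / b` with the weights `μ a / z` and `ν b / z`.
  have hweights : μ * a / z + ν * b / z = 1 := by rw [← add_div, div_self hz_pos.ne']
  have hpoint : μ * a / z * (c / a) + ν * b / z * (c / b) = c / z := by
    field_simp; exact hμν
  have hconc := hg.2 (div_pos hc ha) (div_pos hc hb) (by positivity) (by positivity) hweights
  simp only [smul_eq_mul, hpoint] at hconc ⊢
  calc μ * (a * g (c / a)) + ν * (b * g (c / b))
      = z * (μ * a / z * g (c / a) + ν * b / z * g (c / b)) := by field_simp
    _ ≤ z * g (c / z) := mul_le_mul_of_nonneg_left hconc hz_pos.le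

theorem mul_apply_min_mul_div_eq_min {ψ : ℝ → ℝ} (hψ : MonotoneOn ψ (Ioi 0)) {c₁ c₂ x : ℝ}
    (hc₁ : 0 < c₁) (hc₂ : 0 < c₂) (hx : 0 < x) :
    x * ψ (min (c₁ * x) c₂ / x) = min (x * ψ c₁) (x * ψ (c₂ / x)) := by
  rw [← min_div_div_right hx.le, mul_div_cancel_right₀ _ hx.ne',
    hψ.map_min hc₁ (div_pos hc₂ hx), mul_min_of_nonneg _ _ hx.le]

/-- If `ψ : (0,∞) → ℝ` is concave and nondecreasing and `c₁, c₂ > 0`, then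
`h(x) = x * ψ (min (c₁ x) c₂ / x)` satisfies
`h(x) = min (x * ψ c₁) (x * ψ (c₂ / x))` for every `x > 0`, and consequently `h` is
concave on `(0,∞)`. -/
theorem min_power_rate_concave (ψ : ℝ → ℝ) (c₁ c₂ : ℝ) (hc₁ : 0 < c₁) (hc₂ : 0 < c₂)
    (hψconc : ConcaveOn ℝ (Set.Ioi (0 : ℝ)) ψ)
    (hψmono : MonotoneOn ψ (Set.Ioi (0 : ℝ))) :
    (∀ x : ℝ, 0 < x →
        x * ψ (min (c₁ * x) c₂ / x) = min (x * ψ c₁) (x * ψ (c₂ / x))) ∧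
      ConcaveOn ℝ (Set.Ioi (0 : ℝ)) (fun x : ℝ => x * ψ (min (c₁ * x) c₂ / x)) := by
  have hmin (x : ℝ) (hx : 0 < x) := mul_apply_min_mul_div_eq_min hψmono hc₁ hc₂ hx
  refine ⟨hmin, ?_⟩
  have hlin := (LinearMap.mulRight ℝ (ψ c₁)).concaveOn (convex_Ioi (0 : ℝ))
  exact (hlin.inf (hψconc.mul_apply_const_div hc₂)).congr fun x hx => (hmin x hx).symm
end

section
/- Let L ≥ 1, let 0 = ρ_0 < ρ_1 < … < ρ_L, and let f : [0, ρ_L] → ℝ be concave and nondecreasing. For each l = 1, …, L define f_l(x) = f(ρ_{l−1} + x) − f(ρ_{l−1}) for x ∈ [0, ρ_l − ρ_{l−1}]. Then for every R ∈ [0, ρ_L], the maximum of Σ_{l=1}^L f_l(x_l) over all (x_1, …, x_L) with 0 ≤ x_l ≤ ρ_l − ρ_{l−1} for each l and Σ_{l=1}^L x_l ≤ R equals f(R) − f(0), and it is attained at x_l = min( ρ_l − ρ_{l−1}, max(R − ρ_{l−1}, 0) ). -/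
/-!
Concavity makes the increment `f (y + t) - f y` nonincreasing in `y`. For a feasible `x` the
partial sums `S l = ∑_{k<l} x k` stay below `ρ l`, so the reward of segment `l` is at most
`f (S (l + 1)) - f (S l)`; these telescope to `f (S L) - f 0 ≤ f R - f 0`. The greedy allocation
has partial sums `min (ρ l) R`, so its rewards telescope to exactly `f R - f 0`.
-/

theorem ConcaveOn.map_add_sub_map_le {𝕜 : Type*} [Field 𝕜] [LinearOrder 𝕜] [IsStrictOrderedRing 𝕜]
    {s : Set 𝕜} {f : 𝕜 → 𝕜} (hf : ConcaveOn 𝕜 s f) {a b t : 𝕜} (hab : a ≤ b) (ht : 0 ≤ t)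
    (ha : a ∈ s) (hbt : b + t ∈ s) :
    f (b + t) - f b ≤ f (a + t) - f a := by
  rcases ht.eq_or_lt with rfl | ht
  · simp
  -- `a + t` and `b` are the convex combinations of `a` and `b + t` with weights `(1 - w, w)`
  -- and `(w, 1 - w)`; adding the two concavity inequalities gives the claim
  set w := t / (b - a + t)
  have hd : 0 < b - a + t := by linarith
  have hwd : w * (b - a + t) = t := div_mul_cancel₀ t hd.ne'
  have hw₀ : 0 ≤ w := div_nonneg ht.le hd.le
  have hw₁ : 0 ≤ 1 - w := sub_nonneg.2 ((div_le_one hd).2 (by linarith))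
  have h₁ := hf.2 ha hbt hw₁ hw₀ (sub_add_cancel 1 w)
  have h₂ := hf.2 ha hbt hw₀ hw₁ (add_sub_cancel w 1)
  simp only [smul_eq_mul] at h₁ h₂
  rw [show (1 - w) * a + w * (b + t) = a + t by linear_combination hwd] at h₁
  rw [show w * a + (1 - w) * (b + t) = b by linear_combination -hwd] at h₂
  linarith

theorem Finset.sum_range_le_sub_of_le_sub {M : Type*} [AddCommGroup M] [PartialOrder M]
    [IsOrderedAddMonoid M] {n : ℕ} {x ρ : ℕ → M} (hx : ∀ l < n, x l ≤ ρ (l + 1) - ρ l) :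
    ∑ l ∈ range n, x l ≤ ρ n - ρ 0 := by
  rw [← sum_range_sub]
  exact sum_le_sum fun l hl => hx l (mem_range.1 hl)

theorem min_sub_max_sub_eq_min_sub_min {α : Type*} [AddCommGroup α] [LinearOrder α]
    [IsOrderedAddMonoid α] {a b : α} (R : α) (hab : a ≤ b) :
    min (b - a) (max (R - a) 0) = min b R - min a R := by
  rcases le_total R a with h | h
  · simp [min_eq_right h, min_eq_right (h.trans hab), sub_nonpos.2 h, sub_nonneg.2 hab]
  · rw [min_eq_left h, max_eq_left (sub_nonneg.2 h), min_sub_sub_right]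

theorem map_add_min_sub_max_sub {α β : Type*} [AddCommGroup α] [LinearOrder α]
    [IsOrderedAddMonoid α] [AddCommGroup β] (f : α → β) {a b : α} (R : α) (hab : a ≤ b) :
    f (a + min (b - a) (max (R - a) 0)) - f a = f (min b R) - f (min a R) := by
  rw [min_sub_max_sub_eq_min_sub_min R hab]
  rcases le_total R a with h | h
  · simp [min_eq_right h, min_eq_right (h.trans hab)]
  · simp [min_eq_left h]

theorem sum_map_add_sub_map_le_of_sum_le {L : ℕ} {ρ x : ℕ → ℝ} {f : ℝ → ℝ} {R : ℝ}
    (hρ0 : ρ 0 = 0) (hρ : MonotoneOn ρ (Set.Iic L))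
    (hconc : ConcaveOn ℝ (Set.Icc 0 (ρ L)) f) (hmono : MonotoneOn f (Set.Icc 0 (ρ L)))
    (hR : R ∈ Set.Icc 0 (ρ L)) (hx : ∀ l < L, 0 ≤ x l ∧ x l ≤ ρ (l + 1) - ρ l)
    (hxR : ∑ l ∈ Finset.range L, x l ≤ R) :
    ∑ l ∈ Finset.range L, (f (ρ l + x l) - f (ρ l)) ≤ f R - f 0 := by
  set S : ℕ → ℝ := fun n => ∑ l ∈ Finset.range n, x l
  have hρ_mem : ∀ l ≤ L, ρ l ∈ Set.Icc 0 (ρ L) := fun l hl =>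
    ⟨hρ0 ▸ hρ (Nat.zero_le L) hl (Nat.zero_le l), hρ hl (le_refl L) hl⟩
  have hS_le : ∀ l ≤ L, S l ≤ ρ l := fun l hl => by
    simpa [S, hρ0] using
      Finset.sum_range_le_sub_of_le_sub fun k (hk : k < l) => (hx k (hk.trans_le hl)).2
  have hS_mem : ∀ l ≤ L, S l ∈ Set.Icc 0 (ρ L) := fun l hl =>
    ⟨Finset.sum_nonneg fun k hk => (hx k ((Finset.mem_range.1 hk).trans_le hl)).1,
      (hS_le l hl).trans (hρ_mem l hl).2⟩
  calc ∑ l ∈ Finset.range L, (f (ρ l + x l) - f (ρ l))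
      ≤ ∑ l ∈ Finset.range L, (f (S (l + 1)) - f (S l)) := by
        refine Finset.sum_le_sum fun l hl => ?_
        have hl := Finset.mem_range.1 hl
        have hρx : ρ l + x l ∈ Set.Icc 0 (ρ L) :=
          ⟨add_nonneg (hρ_mem l hl.le).1 (hx l hl).1,
            by linarith [(hx l hl).2, (hρ_mem (l + 1) hl).2]⟩
        rw [show S (l + 1) = S l + x l from Finset.sum_range_succ x l]
        exact hconc.map_add_sub_map_le (hS_le l hl.le) (hx l hl).1 (hS_mem l hl.le) hρx
    _ = f (S L) - f 0 := by simpa [S] using Finset.sum_range_sub (fun l => f (S l)) L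
    _ ≤ f R - f 0 := by gcongr; exact hmono (hS_mem L le_rfl) hR hxR

theorem segment_greedy_optimal_general (L : ℕ) (ρ : ℕ → ℝ) (f : ℝ → ℝ)
    (hρ0 : ρ 0 = 0) (hρ : ∀ l, l < L → ρ l < ρ (l + 1))
    (hconc : ConcaveOn ℝ (Set.Icc (0 : ℝ) (ρ L)) f)
    (hmono : MonotoneOn f (Set.Icc (0 : ℝ) (ρ L)))
    (R : ℝ) (hR : R ∈ Set.Icc (0 : ℝ) (ρ L)) :
    (∀ x : ℕ → ℝ, (∀ l, l < L → 0 ≤ x l ∧ x l ≤ ρ (l + 1) - ρ l) →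
        (∑ l ∈ Finset.range L, x l) ≤ R →
        (∑ l ∈ Finset.range L, (f (ρ l + x l) - f (ρ l))) ≤ f R - f 0) ∧
      ((∀ l, l < L →
          0 ≤ min (ρ (l + 1) - ρ l) (max (R - ρ l) 0) ∧
            min (ρ (l + 1) - ρ l) (max (R - ρ l) 0) ≤ ρ (l + 1) - ρ l) ∧
        (∑ l ∈ Finset.range L, min (ρ (l + 1) - ρ l) (max (R - ρ l) 0)) ≤ R ∧
        (∑ l ∈ Finset.range L,
            (f (ρ l + min (ρ (l + 1) - ρ l) (max (R - ρ l) 0)) - f (ρ l)))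
          = f R - f 0) := by
  have hρ_mono : MonotoneOn ρ (Set.Iic L) := (strictMonoOn_Iic_of_lt_succ hρ).monotoneOn
  have hstep : ∀ l ∈ Finset.range L, ρ l ≤ ρ (l + 1) := fun l hl =>
    (hρ l (Finset.mem_range.1 hl)).le
  have hmin0 : min (ρ 0) R = 0 := by rw [hρ0, min_eq_left hR.1]
  refine ⟨fun x hx hxR => sum_map_add_sub_map_le_of_sum_le hρ0 hρ_mono hconc hmono hR hx hxR,
    fun l hl => ⟨le_min (sub_nonneg.2 (hρ l hl).le) (le_max_right _ _), min_le_left _ _⟩, ?_, ?_⟩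
  · rw [Finset.sum_congr rfl fun l hl => min_sub_max_sub_eq_min_sub_min R (hstep l hl),
      Finset.sum_range_sub (fun l => min (ρ l) R), hmin0, sub_zero]
    exact min_le_right _ _
  · rw [Finset.sum_congr rfl fun l hl => map_add_min_sub_max_sub f R (hstep l hl),
      Finset.sum_range_sub (fun l => f (min (ρ l) R)), hmin0, min_eq_right hR.2]

/-- Greedy segment filling is optimal: for breakpoints `0 = ρ 0 < ρ 1 < … < ρ L` and a
concave nondecreasing `f : [0, ρ L] → ℝ`, with segment increments
`f_l(x) = f (ρ (l-1) + x) - f (ρ (l-1))`, for every `R ∈ [0, ρ L]` the maximum of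
`∑_{l=1}^L f_l (x l)` over all `x` with `0 ≤ x l ≤ ρ l - ρ (l-1)` and `∑ x l ≤ R`
equals `f R - f 0`, attained at `x l = min (ρ l - ρ (l-1)) (max (R - ρ (l-1)) 0)`. -/
theorem segment_greedy_optimal (L : ℕ) (hL : 1 ≤ L) (ρ : ℕ → ℝ) (f : ℝ → ℝ)
    (hρ0 : ρ 0 = 0) (hρ : ∀ l, l < L → ρ l < ρ (l + 1))
    (hconc : ConcaveOn ℝ (Set.Icc (0 : ℝ) (ρ L)) f)
    (hmono : MonotoneOn f (Set.Icc (0 : ℝ) (ρ L)))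
    (R : ℝ) (hR : R ∈ Set.Icc (0 : ℝ) (ρ L)) :
    (∀ x : ℕ → ℝ, (∀ l, l < L → 0 ≤ x l ∧ x l ≤ ρ (l + 1) - ρ l) →
        (∑ l ∈ Finset.range L, x l) ≤ R →
        (∑ l ∈ Finset.range L, (f (ρ l + x l) - f (ρ l))) ≤ f R - f 0) ∧
      ((∀ l, l < L →
          0 ≤ min (ρ (l + 1) - ρ l) (max (R - ρ l) 0) ∧
            min (ρ (l + 1) - ρ l) (max (R - ρ l) 0) ≤ ρ (l + 1) - ρ l) ∧
        (∑ l ∈ Finset.range L, min (ρ (l + 1) - ρ l) (max (R - ρ l) 0)) ≤ R ∧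
        (∑ l ∈ Finset.range L,
            (f (ρ l + min (ρ (l + 1) - ρ l) (max (R - ρ l) 0)) - f (ρ l)))
          = f R - f 0) :=
  segment_greedy_optimal_general L ρ f hρ0 hρ hconc hmono R hR
end

section
/- Let ψ : [0,∞) → ℝ be concave, nondecreasing, differentiable on (0,∞), with ψ(0) ≥ 0, and let G, γ, P, I > 0. Then the function h(x) = x · ψ( G · min(γ x, P) / (I x) ) is nondecreasing on (0,∞). -/
/-!
With `t = x / y ∈ [0, 1]`, concavity of `ψ` on `[0, ∞)` and `ψ 0 ≥ 0` give `t ψ(u) ≤ ψ(t u)`.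
Hence `x ψ(u) = y · t ψ(u) ≤ y ψ(t u) ≤ y ψ(v)` whenever `x ≤ y` and `x u ≤ y v`, by monotonicity of
`ψ`. For the rate function, `u = G min(γx, P) / (I x)` and `x u = G min(γx, P) / I` is nondecreasing.
-/

open Set

section ConcaveOnIci

variable {ψ : ℝ → ℝ}

lemma ConcaveOn.mul_le_map_mul (hconc : ConcaveOn ℝ (Ici 0) ψ) (hψ0 : 0 ≤ ψ 0) {t u : ℝ}
    (ht₀ : 0 ≤ t) (ht₁ : t ≤ 1) (hu : 0 ≤ u) : t * ψ u ≤ ψ (t * u) := by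
  have h := hconc.2 (mem_Ici.mpr hu) (mem_Ici.mpr le_rfl) ht₀ (sub_nonneg.mpr ht₁)
    (add_sub_cancel t 1)
  simp only [smul_eq_mul, mul_zero, add_zero] at h
  nlinarith [mul_nonneg (sub_nonneg.mpr ht₁) hψ0]

lemma ConcaveOn.mul_map_le_mul_map (hconc : ConcaveOn ℝ (Ici 0) ψ)
    (hmono : MonotoneOn ψ (Ici 0)) (hψ0 : 0 ≤ ψ 0) {x y u v : ℝ} (hx : 0 ≤ x) (hy : 0 < y)
    (hxy : x ≤ y) (hu : 0 ≤ u) (huv : x * u ≤ y * v) : x * ψ u ≤ y * ψ v := by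
  set t := x / y with ht
  have ht₀ : 0 ≤ t := by positivity
  have ht₁ : t ≤ 1 := (div_le_one hy).mpr hxy
  have htu : t * u ≤ v := by
    rw [div_mul_eq_mul_div, div_le_iff₀ hy, mul_comm v]
    exact huv
  calc x * ψ u = y * (t * ψ u) := by rw [ht]; field_simp
    _ ≤ y * ψ (t * u) := by gcongr; exact hconc.mul_le_map_mul hψ0 ht₀ ht₁ hu
    _ ≤ y * ψ v := by
      gcongr
      exact hmono (mem_Ici.mpr (by positivity)) (mem_Ici.mpr ((mul_nonneg ht₀ hu).trans htu)) htu

lemma ConcaveOn.monotoneOn_mul_comp (hconc : ConcaveOn ℝ (Ici 0) ψ)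
    (hmono : MonotoneOn ψ (Ici 0)) (hψ0 : 0 ≤ ψ 0) {g : ℝ → ℝ} (hg : ∀ x ∈ Ioi 0, 0 ≤ g x)
    (hxg : MonotoneOn (fun x ↦ x * g x) (Ioi 0)) :
    MonotoneOn (fun x ↦ x * ψ (g x)) (Ioi 0) :=
  fun x hx _ hy hxy ↦
    hconc.mul_map_le_mul_map hmono hψ0 (le_of_lt hx) hy hxy (hg x hx) (hxg hx hy hxy)

end ConcaveOnIci

lemma monotoneOn_mul_capped_snr {G γ P I : ℝ} (hG : 0 ≤ G) (hγ : 0 ≤ γ) (hI : 0 < I) :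
    MonotoneOn (fun x : ℝ ↦ x * (G * min (γ * x) P / (I * x))) (Ioi 0) := by
  intro x hx y hy hxy
  have hcancel : ∀ z : ℝ, z ≠ 0 → z * (G * min (γ * z) P / (I * z)) = G * min (γ * z) P / I :=
    fun z hz ↦ by field_simp
  simp only [hcancel x (ne_of_gt hx), hcancel y (ne_of_gt hy)]
  gcongr

theorem rate_monotone_general (ψ : ℝ → ℝ) (G γ P I : ℝ)
    (hG : 0 < G) (hγ : 0 < γ) (hP : 0 < P) (hI : 0 < I)
    (hψconc : ConcaveOn ℝ (Set.Ici (0 : ℝ)) ψ)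
    (hψmono : MonotoneOn ψ (Set.Ici (0 : ℝ)))
    (hψ0 : 0 ≤ ψ 0) :
    MonotoneOn (fun x : ℝ => x * ψ (G * min (γ * x) P / (I * x))) (Set.Ioi (0 : ℝ)) := by
  refine hψconc.monotoneOn_mul_comp hψmono hψ0 (fun x hx ↦ ?_)
    (monotoneOn_mul_capped_snr hG.le hγ.le hI)
  have hx : 0 < x := hx
  have hmin : 0 < min (γ * x) P := lt_min (by positivity) hP
  positivity

/-- If `ψ : [0,∞) → ℝ` is concave, nondecreasing, differentiable on `(0,∞)` with
`ψ 0 ≥ 0`, and `G, γ, P, I > 0`, then the achievable-rate function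
`h(x) = x * ψ (G * min (γ x) P / (I x))` is nondecreasing on `(0,∞)`. -/
theorem rate_monotone (ψ : ℝ → ℝ) (G γ P I : ℝ)
    (hG : 0 < G) (hγ : 0 < γ) (hP : 0 < P) (hI : 0 < I)
    (hψconc : ConcaveOn ℝ (Set.Ici (0 : ℝ)) ψ)
    (hψmono : MonotoneOn ψ (Set.Ici (0 : ℝ)))
    (hψdiff : DifferentiableOn ℝ ψ (Set.Ioi (0 : ℝ)))
    (hψ0 : 0 ≤ ψ 0) :
    MonotoneOn (fun x : ℝ => x * ψ (G * min (γ * x) P / (I * x))) (Set.Ioi (0 : ℝ)) :=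
  rate_monotone_general ψ G γ P I hG hγ hP hI hψconc hψmono hψ0
end
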